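/- Let x₁, x₂ ∈ ℝ and set A := (Φ̄(x₁) φ(x₂)) / (φ(x₁) Φ̄(x₂)). Then, as (ε₁, ε₂) → (0,0) in ℝ², the difference Φ̄(x₁ + ε₁)/Φ̄(x₂ + ε₂) − Φ̄(x₁ + ε₁ − A ε₂)/Φ̄(x₂) is O(ε₁² + ε₂²); i.e., there exist δ > 0 and K > 0 such that whenever ε₁² + ε₂² < δ, the absolute value of this difference is at most K(ε₁² + ε₂²). -/

import Mathlib

/-!
Write `A` for the slope in the statement and `f ε` for the difference. Since `Φ̄' = -φ`, `f` is
smooth with `f 0 = 0`, and its gradient at `0` is `(0, Φ̄(x₁)φ(x₂)/Φ̄(x₂)² - A φ(x₁)/Φ̄(x₂))`: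
the `ε₁`-derivatives of the two ratios agree, and `A` is exactly the slope that also cancels the
`ε₂`-derivative. A `C²` function is approximated to second order by its first-order Taylor
polynomial (mean value inequality for its locally Lipschitz derivative), so `f ε = O(‖ε‖²)`.
-/

open MeasureTheory Set

/-- The standard normal density. -/
noncomputable def stdphi (t : ℝ) : ℝ :=
  (Real.sqrt (2 * Real.pi))⁻¹ * Real.exp (-t ^ 2 / 2)

/-- The standard normal upper-tail probability Φ̄. -/
noncomputable def Phibar (x : ℝ) : ℝ := ∫ t in Set.Ioi x, stdphi t

open Asymptotics Metric Filter Topology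

theorem ContDiffAt.isBigO_taylor_remainder_one {E F : Type*} [NormedAddCommGroup E]
    [NormedSpace ℝ E] [NormedAddCommGroup F] [NormedSpace ℝ F] {f : E → F} {x : E}
    (hf : ContDiffAt ℝ 2 f x) :
    (fun y => f y - f x - fderiv ℝ f x (y - x)) =O[𝓝 x] fun y => ‖y - x‖ ^ 2 := by
  obtain ⟨K, t, ht, hlip⟩ := (hf.fderiv_right (m := 1) le_rfl).exists_lipschitzOnWith
  have hdiff : ∀ᶠ y in 𝓝 x, DifferentiableAt ℝ f y :=
    (hf.eventually (by simp)).mono fun y hy => hy.differentiableAt (by norm_num)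
  obtain ⟨r, hr, hball⟩ := Metric.mem_nhds_iff.mp (inter_mem ht hdiff)
  refine IsBigO.of_bound K ?_
  filter_upwards [ball_mem_nhds x hr] with y hy
  have hsub : closedBall x ‖y - x‖ ⊆ ball x r := closedBall_subset_ball (mem_ball_iff_norm.1 hy)
  have hfderiv_near : ∀ z ∈ closedBall x ‖y - x‖,
      ‖fderiv ℝ f z - fderiv ℝ f x‖ ≤ K * ‖y - x‖ := fun z hz => by
    rw [← dist_eq_norm]
    exact (hlip.dist_le_mul z (hball (hsub hz)).1 x (mem_of_mem_nhds ht)).trans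
      (by rw [dist_eq_norm]; gcongr; exact mem_closedBall_iff_norm.1 hz)
  calc ‖f y - f x - fderiv ℝ f x (y - x)‖
      ≤ K * ‖y - x‖ * ‖y - x‖ :=
        (convex_closedBall x _).norm_image_sub_le_of_norm_fderiv_le'
          (fun z hz => (hball (hsub hz)).2) hfderiv_near
          (mem_closedBall_self (norm_nonneg _)) (mem_closedBall_iff_norm.2 le_rfl)
    _ = K * ‖‖y - x‖ ^ 2‖ := by rw [norm_pow, norm_norm]; ring

lemma norm_prod_sq_le (a b : ℝ) : ‖(a, b)‖ ^ 2 ≤ a ^ 2 + b ^ 2 := by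
  rw [Prod.norm_mk, Real.norm_eq_abs, Real.norm_eq_abs]
  rcases le_total |a| |b| with h | h
  · rw [max_eq_right h, sq_abs]; linarith [sq_nonneg a]
  · rw [max_eq_left h, sq_abs]; linarith [sq_nonneg b]

lemma exists_bound_of_isBigO_norm_sq {f : ℝ × ℝ → ℝ} (h : f =O[𝓝 0] fun ε => ‖ε‖ ^ 2) :
    ∃ δ K : ℝ, 0 < δ ∧ 0 < K ∧ ∀ ε₁ ε₂ : ℝ, ε₁ ^ 2 + ε₂ ^ 2 < δ →
      |f (ε₁, ε₂)| ≤ K * (ε₁ ^ 2 + ε₂ ^ 2) := by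
  obtain ⟨K, hK, hKf⟩ := h.exists_pos
  obtain ⟨r, hr, hball⟩ := Metric.eventually_nhds_iff_ball.1 hKf.bound
  refine ⟨r ^ 2, K, by positivity, hK, fun ε₁ ε₂ hε => ?_⟩
  have hmem : (ε₁, ε₂) ∈ ball 0 r := mem_ball_zero_iff.2 <|
    (pow_lt_pow_iff_left₀ (norm_nonneg _) hr.le two_ne_zero).1
      ((norm_prod_sq_le ε₁ ε₂).trans_lt hε)
  calc |f (ε₁, ε₂)| ≤ K * ‖‖(ε₁, ε₂)‖ ^ 2‖ := hball _ hmem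
    _ ≤ K * (ε₁ ^ 2 + ε₂ ^ 2) := by
      rw [norm_pow, norm_norm]
      gcongr
      exact norm_prod_sq_le ε₁ ε₂

lemma stdphi_pos (t : ℝ) : 0 < stdphi t := by
  unfold stdphi
  positivity

lemma contDiff_stdphi {n : WithTop ℕ∞} : ContDiff ℝ n stdphi := by
  unfold stdphi
  fun_prop

lemma continuous_stdphi : Continuous stdphi :=
  contDiff_stdphi (n := 0).continuous

lemma integrable_stdphi : Integrable stdphi := by
  refine ((integrable_exp_neg_mul_sq (by norm_num : (0:ℝ) < 1/2)).const_mul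
    (Real.sqrt (2 * Real.pi))⁻¹).congr (.of_forall fun t => ?_)
  simp only [stdphi]
  ring_nf

lemma Phibar_pos (x : ℝ) : 0 < Phibar x := by
  rw [Phibar, setIntegral_pos_iff_support_of_nonneg_ae
      (.of_forall fun t => (stdphi_pos t).le) integrable_stdphi.integrableOn,
    Function.support_eq_univ fun t => (stdphi_pos t).ne', univ_inter, Real.volume_Ioi]
  exact ENNReal.zero_lt_top

lemma hasDerivAt_Phibar (x : ℝ) : HasDerivAt Phibar (-stdphi x) x := by
  have hPhibar : Phibar = fun y => Phibar 0 - ∫ t in (0:ℝ)..y, stdphi t := funext fun y => by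
    rw [← intervalIntegral.integral_Ioi_sub_Ioi' integrable_stdphi.integrableOn
      integrable_stdphi.integrableOn, Phibar, Phibar, sub_sub_cancel]
  rw [hPhibar]
  exact (intervalIntegral.integral_hasDerivAt_right integrable_stdphi.intervalIntegrable
    (continuous_stdphi.stronglyMeasurableAtFilter _ _) continuous_stdphi.continuousAt).const_sub _

lemma contDiff_Phibar {n : ℕ∞} : ContDiff ℝ n Phibar := by
  have hderiv : deriv Phibar = fun x => -stdphi x := funext fun x => (hasDerivAt_Phibar x).deriv
  refine (contDiff_infty_iff_deriv.2 ⟨fun x => (hasDerivAt_Phibar x).differentiableAt, ?_⟩).of_le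
    (by exact_mod_cast le_top)
  rw [hderiv]
  exact contDiff_stdphi.neg

theorem HasFDerivAt.Phibar {E : Type*} [NormedAddCommGroup E] [NormedSpace ℝ E] {u : E → ℝ}
    {u' : E →L[ℝ] ℝ} {x : E} (hu : HasFDerivAt u u' x) :
    HasFDerivAt (fun y => Phibar (u y)) (-stdphi (u x) • u') x :=
  (hasDerivAt_Phibar (u x)).comp_hasFDerivAt x hu

lemma hasFDerivAt_Phibar_div_sub_Phibar_div (x₁ x₂ A : ℝ) :
    HasFDerivAt (fun ε : ℝ × ℝ => Phibar (x₁ + ε.1) / Phibar (x₂ + ε.2)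
        - Phibar (x₁ + ε.1 - A * ε.2) / Phibar x₂)
      ((Phibar x₁ * stdphi x₂ / Phibar x₂ ^ 2 - A * stdphi x₁ / Phibar x₂) •
        ContinuousLinearMap.snd ℝ ℝ ℝ) 0 := by
  have hP₁ := (hasFDerivAt_fst (p := (0 : ℝ × ℝ))).const_add x₁ |>.Phibar
  have hP₂ := (hasFDerivAt_snd (p := (0 : ℝ × ℝ))).const_add x₂ |>.Phibar
  have hP₃ := ((hasFDerivAt_fst (p := (0 : ℝ × ℝ))).const_add x₁).fun_sub
    ((hasFDerivAt_snd (p := (0 : ℝ × ℝ))).const_mul A) |>.Phibar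
  have hinv :=
    (hasDerivAt_inv (Phibar_pos (x₂ + (0 : ℝ × ℝ).2)).ne').comp_hasFDerivAt (0 : ℝ × ℝ) hP₂
  have hP₂x : Phibar x₂ ≠ 0 := (Phibar_pos x₂).ne'
  have hfun : (fun ε : ℝ × ℝ => Phibar (x₁ + ε.1) / Phibar (x₂ + ε.2)
      - Phibar (x₁ + ε.1 - A * ε.2) / Phibar x₂) =
      (fun ε => Phibar (x₁ + ε.1)) * ((·⁻¹) ∘ fun ε => Phibar (x₂ + ε.2))
        - fun ε => Phibar (x₁ + ε.1 - A * ε.2) * (Phibar x₂)⁻¹ := by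
    ext ε
    simp [div_eq_mul_inv]
  rw [hfun]
  refine ((hP₁.mul hinv).sub (hP₃.mul_const (Phibar x₂)⁻¹)).congr_fderiv ?_
  refine ContinuousLinearMap.ext fun v => ?_
  simp only [Prod.fst_zero, add_zero, Prod.snd_zero, neg_smul, smul_neg, Function.comp_apply,
    mul_zero, sub_zero, sub_apply, add_apply, neg_apply, smul_apply, ContinuousLinearMap.coe_snd',
    smul_eq_mul, neg_mul, mul_neg, neg_neg, ContinuousLinearMap.coe_fst', sub_neg_eq_add]
  field_simp
  ring

/-- Auxiliary lemma on ratios of normal tail probabilities: with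
`A = Φ̄(x₁)φ(x₂)/(φ(x₁)Φ̄(x₂))`, the difference
`Φ̄(x₁+ε₁)/Φ̄(x₂+ε₂) − Φ̄(x₁+ε₁−Aε₂)/Φ̄(x₂)` is `O(ε₁² + ε₂²)` as
`(ε₁,ε₂) → (0,0)`. -/
theorem stmt_9 (x₁ x₂ : ℝ) :
    ∃ δ K : ℝ, 0 < δ ∧ 0 < K ∧ ∀ ε₁ ε₂ : ℝ, ε₁ ^ 2 + ε₂ ^ 2 < δ →
      |Phibar (x₁ + ε₁) / Phibar (x₂ + ε₂)
        - Phibar (x₁ + ε₁ - (Phibar x₁ * stdphi x₂ / (stdphi x₁ * Phibar x₂)) * ε₂)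
          / Phibar x₂| ≤ K * (ε₁ ^ 2 + ε₂ ^ 2) := by
  set A := Phibar x₁ * stdphi x₂ / (stdphi x₁ * Phibar x₂) with hA
  set f : ℝ × ℝ → ℝ := fun ε => Phibar (x₁ + ε.1) / Phibar (x₂ + ε.2)
    - Phibar (x₁ + ε.1 - A * ε.2) / Phibar x₂
  have hsmooth : ContDiffAt ℝ 2 f 0 := by
    have : ContDiff ℝ 2 Phibar := contDiff_Phibar (n := 2)
    fun_prop (disch := exact (Phibar_pos _).ne')
  have hcritical : fderiv ℝ f 0 = 0 := by
    have hslope : Phibar x₁ * stdphi x₂ / Phibar x₂ ^ 2 - A * stdphi x₁ / Phibar x₂ = 0 := by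
      have := (stdphi_pos x₁).ne'
      have := (Phibar_pos x₂).ne'
      rw [hA]
      field_simp
      ring
    rw [(hasFDerivAt_Phibar_div_sub_Phibar_div x₁ x₂ A).fderiv, hslope, zero_smul]
  have hf0 : f 0 = 0 := by simp [f]
  have := hsmooth.isBigO_taylor_remainder_one
  simp only [hf0, hcritical, sub_zero, zero_apply] at this
  exact exists_bound_of_isBigO_norm_sq this
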